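/- Let A be a finite-dimensional algebra over a field k and G a finite group acting on A by k-algebra automorphisms. Assume A has a complete set of primitive, pairwise orthogonal idempotents {e_g | g ∈ G} indexed by G with h(e_g) = e_{g h⁻¹} for all g, h ∈ G, and assume the left A-modules A e_g, g ∈ G, are pairwise non-isomorphic. Suppose ν : G → G is a function such that for every g ∈ G the k-linear dual Hom_k(e_g A, k), with left A-action (a · f)(x) := f(xa), is isomorphic to A e_{ν(g)} as a left A-module. Then ν(g) = ν(1)·g for all g ∈ G. -/

import Mathlib

/-!
Transport of structure along `σ = ρ g`: since `σ (e_g) = e_1` and `σ (e_{ν g}) = e_{ν g · g⁻¹}`,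
applying `σ` to an isomorphism `Hom_k(e_g A, k) ≅ A e_{ν g}` of left `A`-modules (and twisting
the action by `σ`) gives `Hom_k(e_1 A, k) ≅ A e_{ν g · g⁻¹}`. Hence `A e_{ν 1} ≅ A e_{ν g · g⁻¹}`,
so `ν 1 = ν g · g⁻¹` because the `A e_h` are pairwise non-isomorphic.
-/

section

variable (k A : Type*) [Field k] [Ring A] [Algebra k A]

/-- The left ideal `A e` of `A`, as a `k`-subspace. -/
noncomputable def leftIdeal (e : A) : Submodule k A :=
  LinearMap.range (LinearMap.mulRight k e)

/-- The right ideal `e A` of `A`, as a `k`-subspace. -/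
noncomputable def rightIdeal (e : A) : Submodule k A :=
  LinearMap.range (LinearMap.mulLeft k e)

/-- Left multiplication by `a` on the left ideal `A e` (the left `A`-action on `A e`). -/
noncomputable def lmulIdeal (e a : A) : leftIdeal k A e →ₗ[k] leftIdeal k A e :=
  (LinearMap.mulLeft k a).restrict (by
    rintro x ⟨y, rfl⟩
    exact ⟨a * y, by simp [LinearMap.mulRight_apply, mul_assoc]⟩)

/-- Right multiplication by `a` on the right ideal `e A`.  It induces the left `A`-action
`(a · f)(x) = f(x a)` on the `k`-linear dual `Hom_k(eA, k)`. -/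
noncomputable def rmulIdeal (e a : A) : rightIdeal k A e →ₗ[k] rightIdeal k A e :=
  (LinearMap.mulRight k a).restrict (by
    rintro x ⟨y, rfl⟩
    exact ⟨y * a, by simp [LinearMap.mulLeft_apply, mul_assoc]⟩)

/-- `Hom_k(e A, k) ≅ A f` as left `A`-modules. -/
def DualRightIdealIsoLeftIdeal (e f : A) : Prop :=
  ∃ Θ : (rightIdeal k A e →ₗ[k] k) ≃ₗ[k] leftIdeal k A f,
    ∀ (a : A) (φ : rightIdeal k A e →ₗ[k] k),
      Θ (φ ∘ₗ rmulIdeal k A e a) = lmulIdeal k A f a (Θ φ)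

def LeftIdealsIso (e f : A) : Prop :=
  ∃ Φ : leftIdeal k A e ≃ₗ[k] leftIdeal k A f,
    ∀ (a : A) (x : leftIdeal k A e), Φ (lmulIdeal k A e a x) = lmulIdeal k A f a (Φ x)

variable {k A}

lemma mem_leftIdeal_iff {e x : A} : x ∈ leftIdeal k A e ↔ ∃ z, z * e = x := by
  simp [leftIdeal, LinearMap.mulRight_apply]

lemma mem_rightIdeal_iff {e x : A} : x ∈ rightIdeal k A e ↔ ∃ z, e * z = x := by
  simp [rightIdeal, LinearMap.mulLeft_apply]

namespace AlgEquiv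

variable (σ : A ≃ₐ[k] A) (e : A)

lemma map_leftIdeal :
    (leftIdeal k A e).map (σ.toLinearEquiv : A →ₗ[k] A) = leftIdeal k A (σ e) := by
  ext x
  simp only [Submodule.mem_map, mem_leftIdeal_iff]
  constructor
  · rintro ⟨_, ⟨z, rfl⟩, rfl⟩
    exact ⟨σ z, by simp⟩
  · rintro ⟨z, rfl⟩
    exact ⟨σ.symm z * e, ⟨_, rfl⟩, by simp⟩

lemma map_rightIdeal :
    (rightIdeal k A e).map (σ.toLinearEquiv : A →ₗ[k] A) = rightIdeal k A (σ e) := by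
  ext x
  simp only [Submodule.mem_map, mem_rightIdeal_iff]
  constructor
  · rintro ⟨_, ⟨z, rfl⟩, rfl⟩
    exact ⟨σ z, by simp⟩
  · rintro ⟨z, rfl⟩
    exact ⟨e * σ.symm z, ⟨_, rfl⟩, by simp⟩

noncomputable def leftIdealEquiv : leftIdeal k A e ≃ₗ[k] leftIdeal k A (σ e) :=
  (σ.toLinearEquiv.submoduleMap _).trans (LinearEquiv.ofEq _ _ (σ.map_leftIdeal e))

noncomputable def rightIdealEquiv : rightIdeal k A e ≃ₗ[k] rightIdeal k A (σ e) :=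
  (σ.toLinearEquiv.submoduleMap _).trans (LinearEquiv.ofEq _ _ (σ.map_rightIdeal e))

lemma leftIdealEquiv_lmulIdeal (a : A) (x : leftIdeal k A e) :
    σ.leftIdealEquiv e (lmulIdeal k A e a x) = lmulIdeal k A (σ e) (σ a) (σ.leftIdealEquiv e x) :=
  Subtype.ext (map_mul σ a x)

lemma rightIdealEquiv_rmulIdeal (a : A) (x : rightIdeal k A e) :
    σ.rightIdealEquiv e (rmulIdeal k A e a x) =
      rmulIdeal k A (σ e) (σ a) (σ.rightIdealEquiv e x) :=
  Subtype.ext (map_mul σ (x : A) a)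

end AlgEquiv

lemma DualRightIdealIsoLeftIdeal.map {e f : A} (h : DualRightIdealIsoLeftIdeal k A e f)
    (σ : A ≃ₐ[k] A) : DualRightIdealIsoLeftIdeal k A (σ e) (σ f) := by
  obtain ⟨Θ, hΘ⟩ := h
  refine ⟨(σ.rightIdealEquiv e).dualMap.trans (Θ.trans (σ.leftIdealEquiv f)), fun a φ => ?_⟩
  have hdual : (σ.rightIdealEquiv e).dualMap (φ ∘ₗ rmulIdeal k A (σ e) a) =
      (σ.rightIdealEquiv e).dualMap φ ∘ₗ rmulIdeal k A e (σ.symm a) := by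
    ext x
    simp only [LinearEquiv.dualMap_apply, LinearMap.comp_apply,
      σ.rightIdealEquiv_rmulIdeal, AlgEquiv.apply_symm_apply]
  simp only [LinearEquiv.trans_apply, hdual, hΘ, σ.leftIdealEquiv_lmulIdeal,
    AlgEquiv.apply_symm_apply]

lemma DualRightIdealIsoLeftIdeal.leftIdealsIso {e f f' : A}
    (h : DualRightIdealIsoLeftIdeal k A e f) (h' : DualRightIdealIsoLeftIdeal k A e f') :
    LeftIdealsIso k A f f' := by
  obtain ⟨Θ, hΘ⟩ := h
  obtain ⟨Θ', hΘ'⟩ := h'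
  refine ⟨Θ.symm.trans Θ', fun a x => ?_⟩
  have hsymm : Θ.symm (lmulIdeal k A f a x) = Θ.symm x ∘ₗ rmulIdeal k A e a := by
    rw [LinearEquiv.symm_apply_eq, hΘ, LinearEquiv.apply_symm_apply]
  rw [LinearEquiv.trans_apply, hsymm, hΘ', LinearEquiv.trans_apply]

variable (k A)

theorem nakayama_compatible_with_action
    (G : Type*) [Group G]
    (ρ : G →* (A ≃ₐ[k] A)) (e : G → A)
    (hinv : ∀ g h, ρ h (e g) = e (g * h⁻¹))
    (hnoniso : ∀ g g' : G,
      (∃ φ : leftIdeal k A (e g) ≃ₗ[k] leftIdeal k A (e g'),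
        ∀ (a : A) (x : leftIdeal k A (e g)),
          φ (lmulIdeal k A (e g) a x) = lmulIdeal k A (e g') a (φ x)) → g = g')
    (ν : G → G)
    (hν : ∀ g : G,
      ∃ Θ : (rightIdeal k A (e g) →ₗ[k] k) ≃ₗ[k] leftIdeal k A (e (ν g)),
        ∀ (a : A) (f : rightIdeal k A (e g) →ₗ[k] k),
          Θ (f ∘ₗ rmulIdeal k A (e g) a) = lmulIdeal k A (e (ν g)) a (Θ f)) :
    ∀ g : G, ν g = ν 1 * g := by
  intro g
  have htwist : DualRightIdealIsoLeftIdeal k A (e 1) (e (ν g * g⁻¹)) := by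
    simpa only [hinv, mul_inv_cancel] using DualRightIdealIsoLeftIdeal.map (hν g) (ρ g)
  have hν1 : ν 1 = ν g * g⁻¹ :=
    hnoniso _ _ (DualRightIdealIsoLeftIdeal.leftIdealsIso (hν 1) htwist)
  rw [hν1, inv_mul_cancel_right]

end
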